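/- arXiv:2010.01058 — 3 statements merged into one kernel-verified Lean document; each statement's English description precedes it below -/
import Mathlib

section
/- Let S_{B'} be a positive semidefinite d×d matrix, and let V_{AB'} be a Hermitian operator on ℂ^{d_A} ⊗ ℂ^d such that I_A ⊗ S_{B'} + V_{AB'} ≥ 0 and I_A ⊗ S_{B'} - V_{AB'} ≥ 0. Let ℳ : M_{d_A}(ℂ) → M_d(ℂ) be a completely positive map with Choi operator Γ^ℳ_{AB'} satisfying (id_A ⊗ T_{B'})(V_{AB'} ± Γ^ℳ_{AB'}) ≥ 0. Suppose d_A = d and let Φ̄_{ÂA} = (1/d) Σ_{i=0}^{d-1} |i⟩⟨i|_Â ⊗ |i⟩⟨i|_A be the maximally classically correlated state and Π_{ÂB'} = Σ_{i=0}^{d-1} |i⟩⟨i|_Â ⊗ |i⟩⟨i|_{B'} the comparator projection. Then Tr[Π_{ÂB'} (id_Â ⊗ ℳ)(Φ̄_{ÂA})] ≤ Tr[S_{B'}]/d. -/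
open Matrix
open scoped Kronecker ComplexOrder

/-- The Choi matrix `Γ^ℳ = Σ_{i,j} |i⟩⟨j| ⊗ ℳ(|i⟩⟨j|)` of a linear map. -/
noncomputable def choiMatrix {da db : ℕ}
    (P : Matrix (Fin da) (Fin da) ℂ →ₗ[ℂ] Matrix (Fin db) (Fin db) ℂ) :
    Matrix (Fin da × Fin db) (Fin da × Fin db) ℂ :=
  Matrix.of fun p q => P (Matrix.single p.1 q.1 1) p.2 q.2

/-- The partial transpose on the second (output) factor `B'`. -/
def partialTransposeB {dA dB : ℕ}
    (X : Matrix (Fin dA × Fin dB) (Fin dA × Fin dB) ℂ) :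
    Matrix (Fin dA × Fin dB) (Fin dA × Fin dB) ℂ :=
  Matrix.of fun p q => X (p.1, q.2) (q.1, p.2)

/-- The tensor extension `id_Â ⊗ ℳ` applied to an operator on `Â ⊗ A`. -/
noncomputable def tensorExt {dS dA dB : ℕ}
    (M : Matrix (Fin dA) (Fin dA) ℂ →ₗ[ℂ] Matrix (Fin dB) (Fin dB) ℂ)
    (ρ : Matrix (Fin dS × Fin dA) (Fin dS × Fin dA) ℂ) :
    Matrix (Fin dS × Fin dB) (Fin dS × Fin dB) ℂ :=
  Matrix.of fun p q =>
    ∑ x : Fin dA, ∑ y : Fin dA,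
      ρ (p.1, x) (q.1, y) * M (Matrix.single x y 1) p.2 q.2

/-! The comparator test reads only the diagonal entries `Γ^ℳ_{ii,ii}` of the Choi matrix, and a
partial transpose does not move diagonal entries. So the diagonals of the two constraints
`(id ⊗ T)(V - Γ^ℳ) ≥ 0` and `I ⊗ S - V ≥ 0` give `Γ^ℳ_{ii,ii} ≤ V_{ii,ii} ≤ S_{ii}`, and summing
over `i` bounds the success probability `(1/d) Σᵢ Γ^ℳ_{ii,ii}` by `Tr S / d`. -/

theorem trace_comparator_mul_tensorExt {d : ℕ}
    (M : Matrix (Fin d) (Fin d) ℂ →ₗ[ℂ] Matrix (Fin d) (Fin d) ℂ) (c : ℂ) :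
    ((Matrix.of fun p q : Fin d × Fin d =>
        if p.1 = p.2 ∧ q.1 = q.2 ∧ p.1 = q.1 then (1 : ℂ) else 0) *
      tensorExt M (Matrix.of fun p q : Fin d × Fin d =>
        if p.1 = p.2 ∧ q.1 = q.2 ∧ p.1 = q.1 then c else 0)).trace
      = c * ∑ i : Fin d, choiMatrix M (i, i) (i, i) := by
  simp only [Matrix.trace, Matrix.diag, Matrix.mul_apply, Matrix.of_apply, tensorExt,
    choiMatrix, Fintype.sum_prod_type]
  simp [ite_and, Finset.mul_sum]

@[simp]
theorem partialTransposeB_apply_self {dA dB : ℕ}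
    (X : Matrix (Fin dA × Fin dB) (Fin dA × Fin dB) ℂ) (p : Fin dA × Fin dB) :
    partialTransposeB X p p = X p p :=
  rfl

theorem Matrix.PosSemidef.apply_le_of_partialTransposeB_sub {dA dB : ℕ}
    {X Y : Matrix (Fin dA × Fin dB) (Fin dA × Fin dB) ℂ}
    (h : (partialTransposeB (X - Y)).PosSemidef) (p : Fin dA × Fin dB) :
    Y p p ≤ X p p := by
  simpa using h.diag_nonneg (i := p)

theorem Matrix.PosSemidef.apply_le_of_one_kronecker_sub {m n : Type*}
    [Fintype m] [DecidableEq m] [Fintype n] {S : Matrix n n ℂ} {V : Matrix (m × n) (m × n) ℂ}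
    (h : ((1 : Matrix m m ℂ) ⊗ₖ S - V).PosSemidef) (i : m) (j : n) :
    V (i, j) (i, j) ≤ S j j := by
  simpa using h.diag_nonneg (i := (i, j))

theorem comparator_test_bound_general {d : ℕ}
    (M : Matrix (Fin d) (Fin d) ℂ →ₗ[ℂ] Matrix (Fin d) (Fin d) ℂ)
    (S : Matrix (Fin d) (Fin d) ℂ)
    (V : Matrix (Fin d × Fin d) (Fin d × Fin d) ℂ)
    (h2 : ((1 : Matrix (Fin d) (Fin d) ℂ) ⊗ₖ S - V).PosSemidef)
    (h4 : (partialTransposeB (V - choiMatrix M)).PosSemidef) :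
    ((Matrix.of fun p q : Fin d × Fin d =>
        if p.1 = p.2 ∧ q.1 = q.2 ∧ p.1 = q.1 then (1 : ℂ) else 0) *
      tensorExt M (Matrix.of fun p q : Fin d × Fin d =>
        if p.1 = p.2 ∧ q.1 = q.2 ∧ p.1 = q.1 then ((d : ℂ))⁻¹ else 0)).trace
      ≤ S.trace / d := by
  have choi_le : ∀ i : Fin d, choiMatrix M (i, i) (i, i) ≤ S i i := fun i =>
    (h4.apply_le_of_partialTransposeB_sub (i, i)).trans (h2.apply_le_of_one_kronecker_sub i i)
  rw [trace_comparator_mul_tensorExt, div_eq_inv_mul, Matrix.trace]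
  exact mul_le_mul_of_nonneg_left (Finset.sum_le_sum fun i _ => choi_le i)
    (inv_nonneg.mpr (Nat.cast_nonneg d))

/-- Bound on the comparator test success probability: if `(S, V)` is
feasible for `β(ℳ) ≤ Tr[S]` (in the point-to-point form), then sending one share of the
maximally classically correlated state `Φ̄` through the completely positive map `ℳ`
passes the comparator test `Π` with probability at most `Tr[S]/d`. -/
theorem comparator_test_bound {d : ℕ} (hd : 0 < d)
    (M : Matrix (Fin d) (Fin d) ℂ →ₗ[ℂ] Matrix (Fin d) (Fin d) ℂ)
    (hCP : (choiMatrix M).PosSemidef)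
    (S : Matrix (Fin d) (Fin d) ℂ) (hS : S.PosSemidef)
    (V : Matrix (Fin d × Fin d) (Fin d × Fin d) ℂ) (hV : V.IsHermitian)
    (h1 : ((1 : Matrix (Fin d) (Fin d) ℂ) ⊗ₖ S + V).PosSemidef)
    (h2 : ((1 : Matrix (Fin d) (Fin d) ℂ) ⊗ₖ S - V).PosSemidef)
    (h3 : (partialTransposeB (V + choiMatrix M)).PosSemidef)
    (h4 : (partialTransposeB (V - choiMatrix M)).PosSemidef) :
    ((Matrix.of fun p q : Fin d × Fin d =>
        if p.1 = p.2 ∧ q.1 = q.2 ∧ p.1 = q.1 then (1 : ℂ) else 0) *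
      tensorExt M (Matrix.of fun p q : Fin d × Fin d =>
        if p.1 = p.2 ∧ q.1 = q.2 ∧ p.1 = q.1 then ((d : ℂ))⁻¹ else 0)).trace
      ≤ S.trace / d :=
  comparator_test_bound_general M S V h2 h4
end

section
/- Let 𝒩 : M_{d_A}(ℂ) → M_{d_B}(ℂ) be a quantum channel (completely positive and trace-preserving). Suppose Hermitian operators S_{B'} and V_{AB'}, with S_{B'} acting on ℂ^{d_B}, satisfy (id_A ⊗ T_{B'})(V_{AB'} + Γ^𝒩_{AB'}) ≥ 0, (id_A ⊗ T_{B'})(V_{AB'} - Γ^𝒩_{AB'}) ≥ 0, I_A ⊗ S_{B'} + V_{AB'} ≥ 0, and I_A ⊗ S_{B'} - V_{AB'} ≥ 0, where Γ^𝒩 is the Choi operator of 𝒩 and T_{B'} the partial transpose. Then Tr[S_{B'}] ≥ 1. -/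
open Matrix
open scoped Kronecker ComplexOrder

/-! Only the traces of the constraints `(id ⊗ T)(V - Γ^𝒩) ≥ 0` and `I_A ⊗ S - V ≥ 0` matter:
the partial transpose preserves the trace, so they give `d_A = Tr Γ^𝒩 ≤ Tr V ≤ d_A Tr S`. -/

lemma Matrix.PosSemidef.trace_le_trace_of_sub {n R : Type*} [Fintype n] [Ring R]
    [PartialOrder R] [StarRing R] [IsOrderedAddMonoid R] {A B : Matrix n n R}
    (h : (A - B).PosSemidef) : B.trace ≤ A.trace := by
  simpa [trace_sub, sub_nonneg] using h.trace_nonneg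

lemma trace_partialTransposeB {dA dB : ℕ}
    (X : Matrix (Fin dA × Fin dB) (Fin dA × Fin dB) ℂ) :
    (partialTransposeB X).trace = X.trace := by
  simp [trace, partialTransposeB]

lemma trace_choiMatrix_of_trace_preserving {dA dB : ℕ}
    {N : Matrix (Fin dA) (Fin dA) ℂ →ₗ[ℂ] Matrix (Fin dB) (Fin dB) ℂ}
    (hTP : ∀ X : Matrix (Fin dA) (Fin dA) ℂ, (N X).trace = X.trace) :
    (choiMatrix N).trace = dA := by
  calc (choiMatrix N).trace = ∑ i : Fin dA, (N (single i i 1)).trace := by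
        simp [trace, choiMatrix, Fintype.sum_prod_type]
    _ = dA := by simp [hTP]

theorem beta_feasible_trace_ge_one_general {dA dB : ℕ}
    (N : Matrix (Fin dA) (Fin dA) ℂ →ₗ[ℂ] Matrix (Fin dB) (Fin dB) ℂ)
    (hTP : ∀ X : Matrix (Fin dA) (Fin dA) ℂ, (N X).trace = X.trace)
    (S : Matrix (Fin dB) (Fin dB) ℂ)
    (V : Matrix (Fin dA × Fin dB) (Fin dA × Fin dB) ℂ)
    (h2 : (partialTransposeB (V - choiMatrix N)).PosSemidef)
    (h4 : ((1 : Matrix (Fin dA) (Fin dA) ℂ) ⊗ₖ S - V).PosSemidef)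
    (hdA : 0 < dA) :
    (1 : ℂ) ≤ S.trace := by
  have hV : (dA : ℂ) ≤ V.trace := by
    have := h2.trace_nonneg
    rwa [trace_partialTransposeB, trace_sub, trace_choiMatrix_of_trace_preserving hTP,
      sub_nonneg] at this
  have hVS : V.trace ≤ dA * S.trace := by
    simpa [trace_kronecker] using h4.trace_le_trace_of_sub
  exact le_of_mul_le_mul_left (by simpa using hV.trans hVS) (by exact_mod_cast hdA)

/-- Non-negativity of the β measure for a point-to-point quantum
channel: if `𝒩` is completely positive and trace preserving and `(S, V)` is a feasible
Hermitian pair, i.e. `(id ⊗ T_{B'})(V ± Γ^𝒩) ≥ 0` and `I_A ⊗ S ± V ≥ 0`,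
then `Tr[S] ≥ 1`. -/
theorem beta_feasible_trace_ge_one {dA dB : ℕ}
    (N : Matrix (Fin dA) (Fin dA) ℂ →ₗ[ℂ] Matrix (Fin dB) (Fin dB) ℂ)
    (hCP : (choiMatrix N).PosSemidef)
    (hTP : ∀ X : Matrix (Fin dA) (Fin dA) ℂ, (N X).trace = X.trace)
    (S : Matrix (Fin dB) (Fin dB) ℂ) (hS : S.IsHermitian)
    (V : Matrix (Fin dA × Fin dB) (Fin dA × Fin dB) ℂ) (hV : V.IsHermitian)
    (h1 : (partialTransposeB (V + choiMatrix N)).PosSemidef)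
    (h2 : (partialTransposeB (V - choiMatrix N)).PosSemidef)
    (h3 : ((1 : Matrix (Fin dA) (Fin dA) ℂ) ⊗ₖ S + V).PosSemidef)
    (h4 : ((1 : Matrix (Fin dA) (Fin dA) ℂ) ⊗ₖ S - V).PosSemidef)
    (hdA : 0 < dA) (hdB : 0 < dB) :
    (1 : ℂ) ≤ S.trace :=
  beta_feasible_trace_ge_one_general N hTP S V h2 h4 hdA
end

section
/- Submultiplicativity of the β measure under composition (point-to-point version): let ℳ¹ : M_{d_A}(ℂ) → M_{d_B}(ℂ) and ℳ² : M_{d_B}(ℂ) → M_{d_C}(ℂ) be completely positive maps. Suppose (S¹, V¹) is feasible for β(ℳ¹) with value Tr[S¹] and (S², V²) is feasible for β(ℳ²) with value Tr[S²]; i.e., T_B(V¹ ± Γ^{ℳ¹}_{AB}) ≥ 0, I_A ⊗ S¹_B ± V¹_{AB} ≥ 0, T_C(V² ± Γ^{ℳ²}_{BC}) ≥ 0, I_B ⊗ S²_C ± V²_{BC} ≥ 0. Then there is a feasible pair for β(ℳ² ∘ ℳ¹) with value at most Tr[S¹]·Tr[S²]; consequently β(ℳ² ∘ ℳ¹) ≤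 β(ℳ¹)·β(ℳ²). -/
open Matrix
open scoped Kronecker ComplexOrder

/-- The partial transpose on the second (output) factor. -/
def partialTransposeOut {dA dB : ℕ}
    (X : Matrix (Fin dA × Fin dB) (Fin dA × Fin dB) ℂ) :
    Matrix (Fin dA × Fin dB) (Fin dA × Fin dB) ℂ :=
  Matrix.of fun p q => X (p.1, q.2) (q.1, p.2)

/-- The point-to-point β measure:
`β(ℳ) = inf{Tr[S] : T_out(V ± Γ^ℳ) ≥ 0, I_in ⊗ S ± V ≥ 0, S, V Hermitian}`. -/
noncomputable def beta {dA dB : ℕ}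
    (M : Matrix (Fin dA) (Fin dA) ℂ →ₗ[ℂ] Matrix (Fin dB) (Fin dB) ℂ) : ℝ :=
  sInf {x : ℝ | ∃ (S : Matrix (Fin dB) (Fin dB) ℂ)
      (V : Matrix (Fin dA × Fin dB) (Fin dA × Fin dB) ℂ),
    S.IsHermitian ∧ V.IsHermitian ∧
    (partialTransposeOut (V + choiMatrix M)).PosSemidef ∧
    (partialTransposeOut (V - choiMatrix M)).PosSemidef ∧
    ((1 : Matrix (Fin dA) (Fin dA) ℂ) ⊗ₖ S + V).PosSemidef ∧
    ((1 : Matrix (Fin dA) (Fin dA) ℂ) ⊗ₖ S - V).PosSemidef ∧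
    x = S.trace.re}

section LinkProduct

variable {𝕜 ι α β γ : Type*} [RCLike 𝕜] [Fintype β]

/-- In the paper's notation, `linkProduct X Y = Tr_B[X T_B(Y)]`. -/
def linkProduct :
    Matrix (α × β) (α × β) 𝕜 →ₗ[𝕜] Matrix (β × γ) (β × γ) 𝕜 →ₗ[𝕜] Matrix (α × γ) (α × γ) 𝕜 :=
  LinearMap.mk₂ 𝕜
    (fun X Y => of fun p q => ∑ b, ∑ b', X (p.1, b) (q.1, b') * Y (b, p.2) (b', q.2))
    (fun _ _ _ => by ext; simp [add_mul, Finset.sum_add_distrib])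
    (fun _ _ _ => by ext; simp [mul_assoc, Finset.mul_sum])
    (fun _ _ _ => by ext; simp [mul_add, Finset.sum_add_distrib])
    (fun _ _ _ => by ext; simp [mul_left_comm, Finset.mul_sum])

lemma linkProduct_apply (X : Matrix (α × β) (α × β) 𝕜) (Y : Matrix (β × γ) (β × γ) 𝕜)
    (p q : α × γ) :
    linkProduct X Y p q = ∑ b, ∑ b', X (p.1, b) (q.1, b') * Y (b, p.2) (b', q.2) := rfl

def partialTraceOut : Matrix (α × β) (α × β) 𝕜 →ₗ[𝕜] Matrix α α 𝕜 where
  toFun X := of fun a a' => ∑ b, X (a, b) (a', b)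
  map_add' _ _ := by ext; simp [Finset.sum_add_distrib]
  map_smul' _ _ := by ext; simp [Finset.mul_sum]

lemma partialTraceOut_apply (X : Matrix (α × β) (α × β) 𝕜) (a a' : α) :
    partialTraceOut X a a' = ∑ b, X (a, b) (a', b) := rfl

lemma partialTraceOut_one_kronecker [DecidableEq α] (S : Matrix β β 𝕜) :
    partialTraceOut ((1 : Matrix α α 𝕜) ⊗ₖ S) = S.trace • 1 := by
  ext a a'
  simp [partialTraceOut_apply, one_apply, trace, mul_comm]

lemma linkProduct_one_kronecker [DecidableEq β] (X : Matrix (α × β) (α × β) 𝕜)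
    (S : Matrix γ γ 𝕜) : linkProduct X (1 ⊗ₖ S) = partialTraceOut X ⊗ₖ S := by
  ext p q
  simp [linkProduct_apply, partialTraceOut_apply, one_apply, Finset.sum_mul]

lemma Matrix.IsHermitian.linkProduct {X : Matrix (α × β) (α × β) 𝕜}
    {Y : Matrix (β × γ) (β × γ) 𝕜} (hX : X.IsHermitian) (hY : Y.IsHermitian) :
    (_root_.linkProduct X Y).IsHermitian := by
  refine IsHermitian.ext fun p q => ?_
  rw [linkProduct_apply, linkProduct_apply, Finset.sum_comm]
  simp only [star_sum, star_mul', hX.apply, hY.apply]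

lemma Matrix.PosSemidef.partialTraceOut {X : Matrix (α × β) (α × β) 𝕜} (hX : X.PosSemidef) :
    (_root_.partialTraceOut X).PosSemidef := by
  have : _root_.partialTraceOut X = ∑ b, X.submatrix (·, b) (·, b) := by
    ext; simp [partialTraceOut_apply, sum_apply]
  exact this ▸ posSemidef_sum _ fun b _ => hX.submatrix _

lemma Matrix.PosSemidef.sum_blocks [Fintype ι] {M : Matrix (ι × β) (ι × β) 𝕜}
    (hM : M.PosSemidef) : (of fun i j => ∑ b, ∑ b', M (i, b) (j, b')).PosSemidef := by
  classical
  let U : Matrix (ι × β) ι 𝕜 := of fun k i => if k.1 = i then 1 else 0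
  have : (of fun i j => ∑ b, ∑ b', M (i, b) (j, b')) = Uᴴ * M * U := by
    ext i j
    simp [U, mul_apply, Fintype.sum_prod_type_right, ite_mul, mul_ite]
    exact Finset.sum_comm
  exact this ▸ hM.conjTranspose_mul_mul_same U

lemma Matrix.PosSemidef.linkProduct [Fintype α] [Fintype γ] {X : Matrix (α × β) (α × β) 𝕜}
    {Y : Matrix (β × γ) (β × γ) 𝕜} (hX : X.PosSemidef) (hY : Y.PosSemidef) :
    (_root_.linkProduct X Y).PosSemidef :=
  -- `linkProduct X Y` sums the `β × β` blocks of a principal submatrix of `X ⊗ₖ Y`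
  ((hX.kronecker hY).submatrix fun k : (α × γ) × β => ((k.1.1, k.2), (k.2, k.1.2))).sum_blocks

lemma one_kronecker_smul_add_linkProduct [DecidableEq α] [DecidableEq β]
    (X : Matrix (α × β) (α × β) 𝕜) (c : 𝕜) (S : Matrix γ γ 𝕜) (W : Matrix (β × γ) (β × γ) 𝕜) :
    (1 : Matrix α α 𝕜) ⊗ₖ (c • S) + linkProduct X W =
      (c • 1 - partialTraceOut X) ⊗ₖ S + linkProduct X (1 ⊗ₖ S + W) := by
  rw [map_add, linkProduct_one_kronecker, ← add_assoc, ← add_kronecker, sub_add_cancel,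
    smul_kronecker, kronecker_smul]

lemma Matrix.PosSemidef.of_add_of_sub [Fintype ι] {N V : Matrix ι ι 𝕜}
    (hadd : (N + V).PosSemidef) (hsub : (N - V).PosSemidef) : N.PosSemidef := by
  have := (hadd.add hsub).smul (show (0 : ℝ) ≤ 1 / 2 by norm_num)
  rwa [add_add_sub_cancel, ← two_smul ℝ, smul_smul, one_div, inv_mul_cancel₀ two_ne_zero,
    one_smul] at this

lemma Matrix.PosSemidef.of_one_kronecker [DecidableEq α] [Nonempty α] {S : Matrix ι ι 𝕜}
    (h : ((1 : Matrix α α 𝕜) ⊗ₖ S).PosSemidef) : S.PosSemidef := by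
  convert h.submatrix fun j => (Classical.arbitrary α, j)
  ext; simp

lemma Matrix.PosSemidef.of_isEmpty [IsEmpty ι] (A : Matrix ι ι 𝕜) : A.PosSemidef :=
  Subsingleton.elim A 0 ▸ .zero

end LinkProduct

section Fin

variable {dA dB dC : ℕ}

lemma partialTransposeOut_linkProduct (X : Matrix (Fin dA × Fin dB) (Fin dA × Fin dB) ℂ)
    (Y : Matrix (Fin dB × Fin dC) (Fin dB × Fin dC) ℂ) :
    partialTransposeOut (linkProduct X Y) = linkProduct X (partialTransposeOut Y) := rfl

lemma partialTraceOut_partialTransposeOut (X : Matrix (Fin dA × Fin dB) (Fin dA × Fin dB) ℂ) :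
    partialTraceOut (partialTransposeOut X) = partialTraceOut X := rfl

lemma choiMatrix_comp (M1 : Matrix (Fin dA) (Fin dA) ℂ →ₗ[ℂ] Matrix (Fin dB) (Fin dB) ℂ)
    (M2 : Matrix (Fin dB) (Fin dB) ℂ →ₗ[ℂ] Matrix (Fin dC) (Fin dC) ℂ) :
    choiMatrix (M2 ∘ₗ M1) = linkProduct (choiMatrix M1) (choiMatrix M2) := by
  ext ⟨a, c⟩ ⟨a', c'⟩
  have hsingle (b b' : Fin dB) (x : ℂ) : single b b' x = x • single b b' 1 := by
    rw [smul_single, smul_eq_mul, mul_one]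
  conv_lhs => rw [choiMatrix, of_apply, LinearMap.comp_apply,
    matrix_eq_sum_single (M1 (single a a' 1))]
  simp only [map_sum, Matrix.sum_apply, linkProduct_apply, choiMatrix, of_apply]
  refine Finset.sum_congr rfl fun b _ => Finset.sum_congr rfl fun b' _ => ?_
  rw [hsingle, map_smul, Matrix.smul_apply, smul_eq_mul]

end Fin

lemma Matrix.IsHermitian.im_trace {n : Type*} [Fintype n] {A : Matrix n n ℂ}
    (hA : A.IsHermitian) : A.trace.im = 0 :=
  Complex.conj_eq_iff_im.mp <| (trace_conjTranspose A).symm.trans (congrArg trace hA.eq)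

lemma Matrix.IsHermitian.re_trace_smul {m n : Type*} [Fintype m] [Fintype n]
    {A : Matrix m m ℂ} (hA : A.IsHermitian) (B : Matrix n n ℂ) :
    (A.trace • B).trace.re = A.trace.re * B.trace.re := by
  simp [trace_smul, hA.im_trace]

structure IsBetaFeasible {dA dB : ℕ}
    (M : Matrix (Fin dA) (Fin dA) ℂ →ₗ[ℂ] Matrix (Fin dB) (Fin dB) ℂ)
    (S : Matrix (Fin dB) (Fin dB) ℂ) (V : Matrix (Fin dA × Fin dB) (Fin dA × Fin dB) ℂ) :
    Prop where
  isHermitian_S : S.IsHermitian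
  isHermitian_V : V.IsHermitian
  posSemidef_partialTransposeOut_add : (partialTransposeOut (V + choiMatrix M)).PosSemidef
  posSemidef_partialTransposeOut_sub : (partialTransposeOut (V - choiMatrix M)).PosSemidef
  posSemidef_one_kronecker_add : ((1 : Matrix (Fin dA) (Fin dA) ℂ) ⊗ₖ S + V).PosSemidef
  posSemidef_one_kronecker_sub : ((1 : Matrix (Fin dA) (Fin dA) ℂ) ⊗ₖ S - V).PosSemidef

namespace IsBetaFeasible

variable {dA dB dC : ℕ} {M : Matrix (Fin dA) (Fin dA) ℂ →ₗ[ℂ] Matrix (Fin dB) (Fin dB) ℂ}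
  {S : Matrix (Fin dB) (Fin dB) ℂ} {V : Matrix (Fin dA × Fin dB) (Fin dA × Fin dB) ℂ}

lemma posSemidef_S [NeZero dA] (h : IsBetaFeasible M S V) : S.PosSemidef :=
  (PosSemidef.of_add_of_sub h.posSemidef_one_kronecker_add
    h.posSemidef_one_kronecker_sub).of_one_kronecker

lemma posSemidef_trace_smul_one_sub_partialTraceOut (h : IsBetaFeasible M S V) :
    (S.trace • 1 - partialTraceOut (choiMatrix M)).PosSemidef := by
  have : S.trace • 1 - partialTraceOut (choiMatrix M) = partialTraceOut (1 ⊗ₖ S - V) +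
      partialTraceOut (partialTransposeOut (V - choiMatrix M)) := by
    rw [partialTraceOut_partialTransposeOut, ← map_add, sub_add_sub_cancel, map_sub,
      partialTraceOut_one_kronecker]
  exact this ▸ h.posSemidef_one_kronecker_sub.partialTraceOut.add
    h.posSemidef_partialTransposeOut_sub.partialTraceOut

variable {M' : Matrix (Fin dB) (Fin dB) ℂ →ₗ[ℂ] Matrix (Fin dC) (Fin dC) ℂ}
  {S' : Matrix (Fin dC) (Fin dC) ℂ} {V' : Matrix (Fin dB × Fin dC) (Fin dB × Fin dC) ℂ}

lemma posSemidef_kronecker (h : IsBetaFeasible M S V) (h' : IsBetaFeasible M' S' V') :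
    ((S.trace • 1 - partialTraceOut (choiMatrix M)) ⊗ₖ S').PosSemidef := by
  cases dB with
  | zero => simpa [Subsingleton.elim (choiMatrix M) 0] using PosSemidef.zero
  | succ dB => exact h.posSemidef_trace_smul_one_sub_partialTraceOut.kronecker h'.posSemidef_S

theorem comp (hM : (choiMatrix M).PosSemidef) (h : IsBetaFeasible M S V)
    (h' : IsBetaFeasible M' S' V') :
    IsBetaFeasible (M' ∘ₗ M) (S.trace • S') (linkProduct (choiMatrix M) V') where
  isHermitian_S := by
    rw [IsHermitian, conjTranspose_smul, h'.isHermitian_S.eq, ← trace_conjTranspose,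
      h.isHermitian_S.eq]
  isHermitian_V := hM.isHermitian.linkProduct h'.isHermitian_V
  posSemidef_partialTransposeOut_add := by
    rw [choiMatrix_comp, ← map_add, partialTransposeOut_linkProduct]
    exact hM.linkProduct h'.posSemidef_partialTransposeOut_add
  posSemidef_partialTransposeOut_sub := by
    rw [choiMatrix_comp, ← map_sub, partialTransposeOut_linkProduct]
    exact hM.linkProduct h'.posSemidef_partialTransposeOut_sub
  posSemidef_one_kronecker_add := by
    rw [one_kronecker_smul_add_linkProduct]
    exact (h.posSemidef_kronecker h').add (hM.linkProduct h'.posSemidef_one_kronecker_add)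
  posSemidef_one_kronecker_sub := by
    rw [sub_eq_add_neg, ← map_neg, one_kronecker_smul_add_linkProduct, ← sub_eq_add_neg]
    exact (h.posSemidef_kronecker h').add (hM.linkProduct h'.posSemidef_one_kronecker_sub)

end IsBetaFeasible

lemma Real.sInf_le_sInf_mul_sInf {s t u : Set ℝ} (hu : BddBelow u) (hs : s.Nonempty)
    (ht : t.Nonempty) (hs₀ : ∀ x ∈ s, 0 ≤ x) (ht₀ : ∀ y ∈ t, 0 ≤ y)
    (hst : ∀ x ∈ s, ∀ y ∈ t, x * y ∈ u) : sInf u ≤ sInf s * sInf t := by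
  have key : ∀ y ∈ t, sInf u ≤ sInf s * y := fun y hy => by
    rw [mul_comm, ← smul_eq_mul, ← Real.sInf_smul_of_nonneg (ht₀ y hy)]
    refine le_csInf hs.smul_set ?_
    rintro _ ⟨x, hx, rfl⟩
    exact csInf_le hu (by simpa [mul_comm] using hst x hx y hy)
  rw [← smul_eq_mul, ← Real.sInf_smul_of_nonneg (Real.sInf_nonneg hs₀)]
  refine le_csInf ht.smul_set ?_
  rintro _ ⟨y, hy, rfl⟩
  exact key y hy

def betaValues {dA dB : ℕ} (M : Matrix (Fin dA) (Fin dA) ℂ →ₗ[ℂ] Matrix (Fin dB) (Fin dB) ℂ) :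
    Set ℝ :=
  {x | ∃ S V, IsBetaFeasible M S V ∧ x = S.trace.re}

section Beta

variable {dA dB dC : ℕ} {M : Matrix (Fin dA) (Fin dA) ℂ →ₗ[ℂ] Matrix (Fin dB) (Fin dB) ℂ}

lemma beta_eq_sInf_betaValues : beta M = sInf (betaValues M) := by
  refine congrArg sInf (Set.ext fun x => ⟨?_, ?_⟩)
  · rintro ⟨S, V, h₁, h₂, h₃, h₄, h₅, h₆, rfl⟩
    exact ⟨S, V, ⟨h₁, h₂, h₃, h₄, h₅, h₆⟩, rfl⟩
  · rintro ⟨S, V, ⟨h₁, h₂, h₃, h₄, h₅, h₆⟩, rfl⟩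
    exact ⟨S, V, h₁, h₂, h₃, h₄, h₅, h₆, rfl⟩

lemma nonneg_of_mem_betaValues [NeZero dA] {x : ℝ} (hx : x ∈ betaValues M) : 0 ≤ x := by
  obtain ⟨S, V, h, rfl⟩ := hx
  exact (Complex.le_def.mp h.posSemidef_S.trace_nonneg).1

lemma mul_mem_betaValues_comp {M' : Matrix (Fin dB) (Fin dB) ℂ →ₗ[ℂ] Matrix (Fin dC) (Fin dC) ℂ}
    (hM : (choiMatrix M).PosSemidef) {x y : ℝ} (hx : x ∈ betaValues M)
    (hy : y ∈ betaValues M') : x * y ∈ betaValues (M' ∘ₗ M) := by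
  obtain ⟨S, V, h, rfl⟩ := hx
  obtain ⟨S', V', h', rfl⟩ := hy
  exact ⟨_, _, h.comp hM h', (h.isHermitian_S.re_trace_smul S').symm⟩

/-- With no input every Hermitian `S` is feasible, so the feasible values are `{0}` or all of `ℝ`,
and `sInf` is `0` in both cases. -/
lemma beta_of_fin_zero (M : Matrix (Fin 0) (Fin 0) ℂ →ₗ[ℂ] Matrix (Fin dB) (Fin dB) ℂ) :
    beta M = 0 := by
  have mem (S : Matrix (Fin dB) (Fin dB) ℂ) (hS : S.IsHermitian) : S.trace.re ∈ betaValues M :=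
    ⟨S, 0, ⟨hS, isHermitian_zero, .of_isEmpty _, .of_isEmpty _, .of_isEmpty _, .of_isEmpty _⟩,
      rfl⟩
  rw [beta_eq_sInf_betaValues]
  cases dB with
  | zero =>
    have : betaValues M = {0} := Set.eq_singleton_iff_unique_mem.mpr
      ⟨by simpa using mem 0 isHermitian_zero, fun x ⟨S, _, _, hx⟩ => by simp [hx]⟩
    rw [this, csInf_singleton]
  | succ dB =>
    have : betaValues M = Set.univ := Set.eq_univ_of_forall fun x => by
      simpa using mem (single 0 0 (x : ℂ)) (by simp [IsHermitian, conjTranspose_single])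
    rw [this, Real.sInf_univ]

theorem beta_comp_le {M' : Matrix (Fin dB) (Fin dB) ℂ →ₗ[ℂ] Matrix (Fin dC) (Fin dC) ℂ}
    (hM : (choiMatrix M).PosSemidef) (hne : (betaValues M).Nonempty)
    (hne' : (betaValues M').Nonempty) : beta (M' ∘ₗ M) ≤ beta M * beta M' := by
  cases dA with
  | zero => rw [beta_of_fin_zero, beta_of_fin_zero, zero_mul]
  | succ dA =>
    have hbdd : BddBelow (betaValues (M' ∘ₗ M)) := ⟨0, fun _ => nonneg_of_mem_betaValues⟩
    simp only [beta_eq_sInf_betaValues]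
    cases dB with
    | zero =>
      obtain ⟨x, hx⟩ := hne
      obtain ⟨y, hy⟩ := hne'
      have hx₀ : x = 0 := by
        obtain ⟨S, _, _, rfl⟩ := hx
        simp
      subst hx₀
      rw [IsLeast.csInf_eq ⟨hx, fun _ => nonneg_of_mem_betaValues⟩, zero_mul]
      exact csInf_le hbdd (zero_mul y ▸ mul_mem_betaValues_comp hM hx hy)
    | succ dB =>
      exact Real.sInf_le_sInf_mul_sInf hbdd hne hne' (fun _ => nonneg_of_mem_betaValues)
        (fun _ => nonneg_of_mem_betaValues) fun _ hx _ hy => mul_mem_betaValues_comp hM hx hy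

end Beta

theorem beta_submultiplicative_general {dA dB dC : ℕ}
    (M1 : Matrix (Fin dA) (Fin dA) ℂ →ₗ[ℂ] Matrix (Fin dB) (Fin dB) ℂ)
    (M2 : Matrix (Fin dB) (Fin dB) ℂ →ₗ[ℂ] Matrix (Fin dC) (Fin dC) ℂ)
    (hM1 : (choiMatrix M1).PosSemidef)
    (S1 : Matrix (Fin dB) (Fin dB) ℂ)
    (V1 : Matrix (Fin dA × Fin dB) (Fin dA × Fin dB) ℂ)
    (hS1 : S1.IsHermitian) (hV1 : V1.IsHermitian)
    (h11 : (partialTransposeOut (V1 + choiMatrix M1)).PosSemidef)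
    (h12 : (partialTransposeOut (V1 - choiMatrix M1)).PosSemidef)
    (h13 : ((1 : Matrix (Fin dA) (Fin dA) ℂ) ⊗ₖ S1 + V1).PosSemidef)
    (h14 : ((1 : Matrix (Fin dA) (Fin dA) ℂ) ⊗ₖ S1 - V1).PosSemidef)
    (S2 : Matrix (Fin dC) (Fin dC) ℂ)
    (V2 : Matrix (Fin dB × Fin dC) (Fin dB × Fin dC) ℂ)
    (hS2 : S2.IsHermitian) (hV2 : V2.IsHermitian)
    (h21 : (partialTransposeOut (V2 + choiMatrix M2)).PosSemidef)
    (h22 : (partialTransposeOut (V2 - choiMatrix M2)).PosSemidef)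
    (h23 : ((1 : Matrix (Fin dB) (Fin dB) ℂ) ⊗ₖ S2 + V2).PosSemidef)
    (h24 : ((1 : Matrix (Fin dB) (Fin dB) ℂ) ⊗ₖ S2 - V2).PosSemidef) :
    (∃ (S3 : Matrix (Fin dC) (Fin dC) ℂ)
        (V3 : Matrix (Fin dA × Fin dC) (Fin dA × Fin dC) ℂ),
      S3.IsHermitian ∧ V3.IsHermitian ∧
      (partialTransposeOut (V3 + choiMatrix (M2 ∘ₗ M1))).PosSemidef ∧
      (partialTransposeOut (V3 - choiMatrix (M2 ∘ₗ M1))).PosSemidef ∧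
      ((1 : Matrix (Fin dA) (Fin dA) ℂ) ⊗ₖ S3 + V3).PosSemidef ∧
      ((1 : Matrix (Fin dA) (Fin dA) ℂ) ⊗ₖ S3 - V3).PosSemidef ∧
      S3.trace.re ≤ S1.trace.re * S2.trace.re)
    ∧ beta (M2 ∘ₗ M1) ≤ beta M1 * beta M2 := by
  have h₁ : IsBetaFeasible M1 S1 V1 := ⟨hS1, hV1, h11, h12, h13, h14⟩
  have h₂ : IsBetaFeasible M2 S2 V2 := ⟨hS2, hV2, h21, h22, h23, h24⟩
  obtain ⟨h₃₁, h₃₂, h₃₃, h₃₄, h₃₅, h₃₆⟩ := h₁.comp hM1 h₂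
  exact ⟨⟨_, _, h₃₁, h₃₂, h₃₃, h₃₄, h₃₅, h₃₆, (hS1.re_trace_smul S2).le⟩,
    beta_comp_le hM1 ⟨_, _, _, h₁, rfl⟩ ⟨_, _, _, h₂, rfl⟩⟩

/-- Submultiplicativity of β under composition (point-to-point):
given feasible pairs `(S¹, V¹)` for `β(ℳ¹)` and `(S², V²)` for `β(ℳ²)`, there is a
feasible pair for `β(ℳ² ∘ ℳ¹)` with value at most `Tr[S¹]·Tr[S²]`; consequently
`β(ℳ² ∘ ℳ¹) ≤ β(ℳ¹)·β(ℳ²)`. -/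
theorem beta_submultiplicative {dA dB dC : ℕ}
    (M1 : Matrix (Fin dA) (Fin dA) ℂ →ₗ[ℂ] Matrix (Fin dB) (Fin dB) ℂ)
    (M2 : Matrix (Fin dB) (Fin dB) ℂ →ₗ[ℂ] Matrix (Fin dC) (Fin dC) ℂ)
    (hM1 : (choiMatrix M1).PosSemidef) (hM2 : (choiMatrix M2).PosSemidef)
    (S1 : Matrix (Fin dB) (Fin dB) ℂ)
    (V1 : Matrix (Fin dA × Fin dB) (Fin dA × Fin dB) ℂ)
    (hS1 : S1.IsHermitian) (hV1 : V1.IsHermitian)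
    (h11 : (partialTransposeOut (V1 + choiMatrix M1)).PosSemidef)
    (h12 : (partialTransposeOut (V1 - choiMatrix M1)).PosSemidef)
    (h13 : ((1 : Matrix (Fin dA) (Fin dA) ℂ) ⊗ₖ S1 + V1).PosSemidef)
    (h14 : ((1 : Matrix (Fin dA) (Fin dA) ℂ) ⊗ₖ S1 - V1).PosSemidef)
    (S2 : Matrix (Fin dC) (Fin dC) ℂ)
    (V2 : Matrix (Fin dB × Fin dC) (Fin dB × Fin dC) ℂ)
    (hS2 : S2.IsHermitian) (hV2 : V2.IsHermitian)
    (h21 : (partialTransposeOut (V2 + choiMatrix M2)).PosSemidef)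
    (h22 : (partialTransposeOut (V2 - choiMatrix M2)).PosSemidef)
    (h23 : ((1 : Matrix (Fin dB) (Fin dB) ℂ) ⊗ₖ S2 + V2).PosSemidef)
    (h24 : ((1 : Matrix (Fin dB) (Fin dB) ℂ) ⊗ₖ S2 - V2).PosSemidef) :
    (∃ (S3 : Matrix (Fin dC) (Fin dC) ℂ)
        (V3 : Matrix (Fin dA × Fin dC) (Fin dA × Fin dC) ℂ),
      S3.IsHermitian ∧ V3.IsHermitian ∧
      (partialTransposeOut (V3 + choiMatrix (M2 ∘ₗ M1))).PosSemidef ∧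
      (partialTransposeOut (V3 - choiMatrix (M2 ∘ₗ M1))).PosSemidef ∧
      ((1 : Matrix (Fin dA) (Fin dA) ℂ) ⊗ₖ S3 + V3).PosSemidef ∧
      ((1 : Matrix (Fin dA) (Fin dA) ℂ) ⊗ₖ S3 - V3).PosSemidef ∧
      S3.trace.re ≤ S1.trace.re * S2.trace.re)
    ∧ beta (M2 ∘ₗ M1) ≤ beta M1 * beta M2 :=
  beta_submultiplicative_general M1 M2 hM1 S1 V1 hS1 hV1 h11 h12 h13 h14 S2 V2 hS2 hV2 h21 h22 h23
    h24
end
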